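/- arXiv:1512.04046 — 3 statements merged into one kernel-verified Lean document; each statement's English description precedes it below -/
import Mathlib

section
/- For every algebraic curvature tensor R on V with Ricci tensor ric := ric_R, the Young(2,2) symmetrizer applied to the 4-tensor (x₁,x₂,x₃,x₄) ↦ (R_{x₁,x₂}·ric)(x₃,x₄) vanishes identically. -/
open scoped RealInnerProductSpace

namespace CurvJet

variable {V : Type*} [NormedAddCommGroup V] [InnerProductSpace ℝ V] {n : ℕ}

/-- Quadrilinear forms on `V`, the ambient space of algebraic curvature tensors. -/
abbrev Curv (V : Type*) [NormedAddCommGroup V] [InnerProductSpace ℝ V] : Type _ :=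
  V →ₗ[ℝ] V →ₗ[ℝ] V →ₗ[ℝ] V →ₗ[ℝ] ℝ

/-- The underlying 4-argument function of a quadrilinear form. -/
def toFun4 (R : Curv V) : V → V → V → V → ℝ := fun z₁ z₂ z₃ z₄ => R z₁ z₂ z₃ z₄

/-- `R` is an algebraic curvature tensor: antisymmetry in the first pair, pair symmetry,
and the first Bianchi identity. -/
def IsCurv (R : Curv V) : Prop :=
  (∀ x y z w, R x y z w = - R y x z w) ∧
  (∀ x y z w, R x y z w = R z w x y) ∧
  (∀ x y z w, R x y z w + R y z x w + R z x y w = 0)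

/-- The Ricci tensor `ric_R(x,y) = -∑ᵢ R(x,eᵢ,y,eᵢ)`. -/
noncomputable def ric (e : OrthonormalBasis (Fin n) ℝ V) (R : Curv V) (x y : V) : ℝ :=
  - ∑ i, R x (e i) y (e i)

/-- The curvature endomorphism `R_{x,y}`, characterized by `⟪R_{x,y}z, w⟫ = R(x,y,z,w)`. -/
noncomputable def curvEnd (e : OrthonormalBasis (Fin n) ℝ V) (R : Curv V) (x y z : V) : V :=
  ∑ i, R x y z (e i) • e i

/-- Action of an endomorphism `B` on a covariant 4-tensor by algebraic derivation. -/
def act4 (B : V → V) (A : V → V → V → V → ℝ) (x₁ x₂ x₃ x₄ : V) : ℝ :=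
  -(A (B x₁) x₂ x₃ x₄ + A x₁ (B x₂) x₃ x₄ + A x₁ x₂ (B x₃) x₄ + A x₁ x₂ x₃ (B x₄))

/-- Action of an endomorphism `B` on a covariant 2-tensor by algebraic derivation. -/
def act2 (B : V → V) (A : V → V → ℝ) (x y : V) : ℝ :=
  -(A (B x) y + A x (B y))

/-- `R*A` for a covariant 4-tensor `A`. -/
noncomputable def star4 (e : OrthonormalBasis (Fin n) ℝ V) (R : Curv V)
    (A : V → V → V → V → ℝ) (x₁ x₂ x₃ x₄ : V) : ℝ :=
  -((∑ j, act4 (curvEnd e R x₁ (e j)) A (e j) x₂ x₃ x₄)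
    + (∑ j, act4 (curvEnd e R x₂ (e j)) A x₁ (e j) x₃ x₄)
    + (∑ j, act4 (curvEnd e R x₃ (e j)) A x₁ x₂ (e j) x₄)
    + (∑ j, act4 (curvEnd e R x₄ (e j)) A x₁ x₂ x₃ (e j)))

/-- `R*A` for a covariant 2-tensor `A`. -/
noncomputable def star2 (e : OrthonormalBasis (Fin n) ℝ V) (R : Curv V)
    (A : V → V → ℝ) (x y : V) : ℝ :=
  -((∑ j, act2 (curvEnd e R x (e j)) A (e j) y)
    + (∑ j, act2 (curvEnd e R y (e j)) A x (e j)))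

/-- The algebraic curvature tensor `R*R`. -/
noncomputable def RstarR (e : OrthonormalBasis (Fin n) ℝ V) (R : Curv V) :
    V → V → V → V → ℝ :=
  star4 e R (toFun4 R)

/-- Row symmetrization of the Young tableau with rows `{1,3}`, `{2,4}` on a 4-tensor. -/
def rowSym22 (T : V → V → V → V → ℝ) (x₁ x₂ x₃ x₄ : V) : ℝ :=
  T x₁ x₂ x₃ x₄ + T x₃ x₂ x₁ x₄ + T x₁ x₄ x₃ x₂ + T x₃ x₄ x₁ x₂

/-- The Young symmetrizer of the tableau with rows `{1,3}`, `{2,4}` and columns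
`{1,2}`, `{3,4}`, acting on 4-tensors. -/
def young22 (T : V → V → V → V → ℝ) (x₁ x₂ x₃ x₄ : V) : ℝ :=
  rowSym22 T x₁ x₂ x₃ x₄ - rowSym22 T x₂ x₁ x₃ x₄
    - rowSym22 T x₁ x₂ x₄ x₃ + rowSym22 T x₂ x₁ x₄ x₃

/-- Row symmetrization of the Young tableau with rows `{1,3,5,6}`, `{2,4}` on a 6-tensor. -/
noncomputable def rowSym42 (T : V → V → V → V → V → V → ℝ) (x₁ x₂ x₃ x₄ x₅ x₆ : V) : ℝ :=
  ∑ σ : Equiv.Perm (Fin 4),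
    (T (![x₁, x₃, x₅, x₆] (σ 0)) x₂ (![x₁, x₃, x₅, x₆] (σ 1)) x₄
        (![x₁, x₃, x₅, x₆] (σ 2)) (![x₁, x₃, x₅, x₆] (σ 3))
     + T (![x₁, x₃, x₅, x₆] (σ 0)) x₄ (![x₁, x₃, x₅, x₆] (σ 1)) x₂
        (![x₁, x₃, x₅, x₆] (σ 2)) (![x₁, x₃, x₅, x₆] (σ 3)))

/-- The Young symmetrizer of the tableau on six slots with rows `{1,3,5,6}`, `{2,4}` and
columns `{1,2}`, `{3,4}`. -/
noncomputable def young42 (T : V → V → V → V → V → V → ℝ) (x₁ x₂ x₃ x₄ x₅ x₆ : V) : ℝ :=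
  rowSym42 T x₁ x₂ x₃ x₄ x₅ x₆ - rowSym42 T x₂ x₁ x₃ x₄ x₅ x₆
    - rowSym42 T x₁ x₂ x₄ x₃ x₅ x₆ + rowSym42 T x₂ x₁ x₄ x₃ x₅ x₆

/-- Row symmetrization of the Young tableau with rows `{1,3,5}`, `{2,4}` on a 5-tensor
(the fifth function argument is the slot lying in the first row). -/
noncomputable def rowSym5 (T : V → V → V → V → V → ℝ) (z₁ z₂ z₃ z₄ z₅ : V) : ℝ :=
  ∑ σ : Equiv.Perm (Fin 3),
    (T (![z₁, z₃, z₅] (σ 0)) z₂ (![z₁, z₃, z₅] (σ 1)) z₄ (![z₁, z₃, z₅] (σ 2))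
     + T (![z₁, z₃, z₅] (σ 0)) z₄ (![z₁, z₃, z₅] (σ 1)) z₂ (![z₁, z₃, z₅] (σ 2)))

/-- The Young symmetrizer of the tableau on five slots with rows `{1,3,5}`, `{2,4}` and
columns `{1,2}`, `{3,4}` (the fifth function argument is the slot in the first row). -/
noncomputable def young5 (T : V → V → V → V → V → ℝ) (z₁ z₂ z₃ z₄ z₅ : V) : ℝ :=
  rowSym5 T z₁ z₂ z₃ z₄ z₅ - rowSym5 T z₂ z₁ z₃ z₄ z₅
    - rowSym5 T z₁ z₂ z₄ z₃ z₅ + rowSym5 T z₂ z₁ z₄ z₃ z₅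

/-- First-order jet conditions: each `∇ₓR` is a curvature tensor and the second Bianchi
identity holds. -/
def IsJet1 (D1 : V →ₗ[ℝ] Curv V) : Prop :=
  (∀ x, IsCurv (D1 x)) ∧
  (∀ x y z u v, D1 x y z u v + D1 y z x u v + D1 z x y u v = 0)

/-- Second-order jet conditions: each `∇²_{x,y}R` is a curvature tensor, the second Bianchi
identity holds, and the Ricci identity `∇²_{x,y}R − ∇²_{y,x}R = R_{x,y}·R` holds. -/
def IsJet2 (e : OrthonormalBasis (Fin n) ℝ V) (R : Curv V)
    (D2 : V →ₗ[ℝ] V →ₗ[ℝ] Curv V) : Prop :=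
  (∀ x y, IsCurv (D2 x y)) ∧
  (∀ x y z w u v, D2 x y z w u v + D2 x z w y u v + D2 x w y z u v = 0) ∧
  (∀ x y z₁ z₂ z₃ z₄, D2 x y z₁ z₂ z₃ z₄ - D2 y x z₁ z₂ z₃ z₄ =
    act4 (curvEnd e R x y) (toFun4 R) z₁ z₂ z₃ z₄)

/-- Algebraic two-jet `(R, ∇R, ∇²R)`. -/
def IsTwoJet (e : OrthonormalBasis (Fin n) ℝ V) (R : Curv V)
    (D1 : V →ₗ[ℝ] Curv V) (D2 : V →ₗ[ℝ] V →ₗ[ℝ] Curv V) : Prop :=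
  IsCurv R ∧ IsJet1 D1 ∧ IsJet2 e R D2

/-- `∇ₓric(y,z) = -∑ᵢ ∇ₓR(y,eᵢ,z,eᵢ)`. -/
noncomputable def nablaRic (e : OrthonormalBasis (Fin n) ℝ V)
    (D1 : V →ₗ[ℝ] Curv V) (x y z : V) : ℝ :=
  - ∑ i, D1 x y (e i) z (e i)

/-- `∇²_{x,y}ric(z,w) = -∑ᵢ ∇²_{x,y}R(z,eᵢ,w,eᵢ)`. -/
noncomputable def nabla2Ric (e : OrthonormalBasis (Fin n) ℝ V)
    (D2 : V →ₗ[ℝ] V →ₗ[ℝ] Curv V) (x y z w : V) : ℝ :=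
  - ∑ i, D2 x y z (e i) w (e i)

/-- The rough Laplacian `∇*∇R(z₁,z₂,z₃,z₄) = -∑ᵢ ∇²_{eᵢ,eᵢ}R(z₁,z₂,z₃,z₄)`. -/
noncomputable def roughLap (e : OrthonormalBasis (Fin n) ℝ V)
    (D2 : V →ₗ[ℝ] V →ₗ[ℝ] Curv V) (z₁ z₂ z₃ z₄ : V) : ℝ :=
  - ∑ i, D2 (e i) (e i) z₁ z₂ z₃ z₄

/-- `∇ₓδ_yR(z,w) = -∑ᵢ ∇²_{x,eᵢ}R(eᵢ,y,z,w)`. -/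
noncomputable def nablaDelta (e : OrthonormalBasis (Fin n) ℝ V)
    (D2 : V →ₗ[ℝ] V →ₗ[ℝ] Curv V) (x y z w : V) : ℝ :=
  - ∑ i, D2 x (e i) (e i) y z w

/-- The two-jet is Einstein: `ric = c⟪·,·⟫`, `∇ric = 0` and `∇²ric = 0`. -/
def IsEinsteinJet (e : OrthonormalBasis (Fin n) ℝ V) (R : Curv V)
    (D1 : V →ₗ[ℝ] Curv V) (D2 : V →ₗ[ℝ] V →ₗ[ℝ] Curv V) : Prop :=
  (∃ c : ℝ, ∀ x y, ric e R x y = c * ⟪x, y⟫) ∧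
  (∀ x y z, nablaRic e D1 x y z = 0) ∧
  (∀ x y z w, nabla2Ric e D2 x y z w = 0)

/- Modulo the two symmetries, the sixteen terms of the symmetrizer cancel in pairs. -/
theorem young22_eq_zero_of_antisymm_symm {W : Type*} (T : W → W → W → W → ℝ)
    (hA : ∀ a b c d, T b a c d = -T a b c d) (hS : ∀ a b c d, T a b d c = T a b c d)
    (a b c d : W) : young22 T a b c d = 0 := by
  simp only [young22, rowSym22]
  linarith [hA a b c d, hA a b d c, hS a b c d, hA b c a d, hS b c d a,
    hA a d c b, hS d a b c, hS c d b a, hA a c b d, hS a c d b,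
    hA b d c a, hS d b a c, hS d c b a]

section Ricci

variable (e : OrthonormalBasis (Fin n) ℝ V) (R : Curv V)

theorem ric_comm (hR : ∀ x y z w, R x y z w = R z w x y) (x y : V) :
    ric e R x y = ric e R y x := by
  simp only [ric, hR x _ y]

theorem ric_neg_left (x y : V) : ric e R (-x) y = -ric e R x y := by
  rw [← neg_one_smul ℝ x]
  simp only [ric, map_smul, LinearMap.smul_apply, smul_eq_mul, neg_one_mul,
    Finset.sum_neg_distrib]

theorem ric_neg_right (x y : V) : ric e R x (-y) = -ric e R x y := by
  simp only [ric, map_neg, LinearMap.neg_apply, Finset.sum_neg_distrib]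

theorem curvEnd_swap (hR : ∀ x y z w, R x y z w = -R y x z w) (x y z : V) :
    curvEnd e R y x z = -curvEnd e R x y z := by
  simp only [curvEnd, hR y x, neg_smul, Finset.sum_neg_distrib]

theorem act2_comm {W : Type*} {B : W → W} {A : W → W → ℝ} (hA : ∀ x y, A x y = A y x)
    (x y : W) : act2 B A y x = act2 B A x y := by
  simp only [act2, hA (B y), hA y]
  ring

theorem act2_curvEnd_swap_ric (hR : ∀ x y z w, R x y z w = -R y x z w) (x y z w : V) :
    act2 (curvEnd e R y x) (ric e R) z w = -act2 (curvEnd e R x y) (ric e R) z w := by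
  simp only [act2]
  rw [curvEnd_swap e R hR x y z, curvEnd_swap e R hR x y w, ric_neg_left, ric_neg_right]
  ring

end Ricci

/-- The Young(2,2)-symmetrization of
`(x₁,x₂,x₃,x₄) ↦ (R_{x₁,x₂}·ric)(x₃,x₄)` vanishes. -/
theorem young22_curvAction_ric_eq_zero
    {V : Type*} [NormedAddCommGroup V] [InnerProductSpace ℝ V] {n : ℕ}
    (e : OrthonormalBasis (Fin n) ℝ V)
    (R : Curv V) (hR : IsCurv R) :
    ∀ x₁ x₂ x₃ x₄,
      young22 (fun z₁ z₂ z₃ z₄ => act2 (curvEnd e R z₁ z₂) (ric e R) z₃ z₄) x₁ x₂ x₃ x₄ = 0 := by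
  obtain ⟨h_antisymm, h_pair, -⟩ := hR
  exact young22_eq_zero_of_antisymm_symm _
    (act2_curvEnd_swap_ric e R h_antisymm)
    (fun a b c d => act2_comm (ric_comm e R h_pair) c d)

end CurvJet
end

section
/- Let R be an algebraic curvature tensor on V with vanishing Ricci tensor (ric_R = 0), and fix x₂,x₄,x₅,x₆ ∈ V. Then Σᵢ Young(2,2)[(z₁,z₂,z₃,z₄) ↦ ⟪z₁,x₆⟫·R(z₃,z₂,x₅,z₄)](eᵢ,x₂,eᵢ,x₄) = 3·( R(x₆,x₂,x₅,x₄) + R(x₆,x₄,x₅,x₂) ). -/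
open scoped RealInnerProductSpace

namespace CurvJet

variable {V : Type*} [NormedAddCommGroup V] [InnerProductSpace ℝ V] {n : ℕ}

/-!
In `young22 T (eᵢ) x₂ (eᵢ) x₄` the two copies of `eᵢ` fill the row `{1,3}`, so the row
symmetrization doubles the terms in which `eᵢ` stays in slots 1 and 3. After summing over `i`,
every term in which `eᵢ` enters the inner product `⟪eᵢ, x₆⟫` contracts to `R` with `x₆` in
place of `eᵢ`; every other term is a Ricci trace of `R` or has `eᵢ` twice in an antisymmetric
pair, so it vanishes. Antisymmetry in the first pair collects the six surviving contractions
into `3 (R(x₆,x₂,x₅,x₄) + R(x₆,x₄,x₅,x₂))`.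
-/

theorem _root_.OrthonormalBasis.sum_inner_smul_apply {ι M : Type*} [Fintype ι]
    [AddCommMonoid M] [Module ℝ M] (e : OrthonormalBasis ι ℝ V) (f : V →ₗ[ℝ] M) (x : V) :
    ∑ i, ⟪e i, x⟫ • f (e i) = f x := by
  simp only [← map_smul, ← map_sum, e.sum_repr']

lemma sum_inner_mul_apply_fst {ι : Type*} [Fintype ι] (e : OrthonormalBasis ι ℝ V) (R : Curv V)
    (x y z w : V) : ∑ i, ⟪e i, x⟫ * R (e i) y z w = R x y z w := by
  simpa using congr($(e.sum_inner_smul_apply R x) y z w)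

lemma sum_inner_mul_apply_snd {ι : Type*} [Fintype ι] (e : OrthonormalBasis ι ℝ V) (R : Curv V)
    (x y z w : V) : ∑ i, ⟪e i, x⟫ * R y (e i) z w = R y x z w := by
  simpa using congr($(e.sum_inner_smul_apply (R y) x) z w)

lemma sum_inner_mul_apply_fourth {ι : Type*} [Fintype ι] (e : OrthonormalBasis ι ℝ V)
    (R : Curv V) (x y z w : V) : ∑ i, ⟪e i, x⟫ * R y z w (e i) = R y z w x := by
  simpa using e.sum_inner_smul_apply (R y z w) x

lemma IsCurv.apply_self {R : Curv V} (hR : IsCurv R) (x z w : V) : R x x z w = 0 := by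
  linarith [hR.1 x x z w]

lemma sum_apply_basis_snd_fourth {e : OrthonormalBasis (Fin n) ℝ V} {R : Curv V}
    (hric : ∀ x y, ric e R x y = 0) (y z : V) : ∑ i, R y (e i) z (e i) = 0 :=
  neg_eq_zero.mp (hric y z)

lemma IsCurv.sum_apply_basis_fst_fourth {e : OrthonormalBasis (Fin n) ℝ V} {R : Curv V}
    (hR : IsCurv R) (hric : ∀ x y, ric e R x y = 0) (y z : V) :
    ∑ i, R (e i) y z (e i) = 0 := by
  simp_rw [hR.1 (e _) y, Finset.sum_neg_distrib, neg_eq_zero]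
  exact sum_apply_basis_snd_fourth hric y z

lemma young22_apply_diag_first_row {V : Type*} (T : V → V → V → V → ℝ) (a b c : V) :
    young22 T a b a c =
      2 * (T a b a c + T a c a b + T b a c a + T c a b a)
        - (T b a a c + T a a b c + T b c a a + T a c b a
          + T a b c a + T c b a a + T a a c b + T c a a b) := by
  simp only [young22, rowSym22]
  ring

/-- Trace of the Young(2,2)-symmetrization of
`(z₁,z₂,z₃,z₄) ↦ ⟪z₁,x₆⟫·R(z₃,z₂,x₅,z₄)` for Ricci-flat `R`. -/
theorem young22_trace_metric_left
    {V : Type*} [NormedAddCommGroup V] [InnerProductSpace ℝ V] {n : ℕ}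
    (e : OrthonormalBasis (Fin n) ℝ V)
    (R : Curv V) (hR : IsCurv R) (hric : ∀ x y, ric e R x y = 0)
    (x₂ x₄ x₅ x₆ : V) :
    ∑ i, young22 (fun z₁ z₂ z₃ z₄ => ⟪z₁, x₆⟫ * R z₃ z₂ x₅ z₄) (e i) x₂ (e i) x₄ =
      3 * (R x₆ x₂ x₅ x₄ + R x₆ x₄ x₅ x₂) := by
  simp only [young22_apply_diag_first_row, hR.apply_self, mul_zero, zero_add, add_zero,
    Finset.sum_sub_distrib, Finset.sum_add_distrib, ← Finset.mul_sum, sum_inner_mul_apply_fst,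
    sum_inner_mul_apply_snd, sum_inner_mul_apply_fourth, sum_apply_basis_snd_fourth hric,
    hR.sum_apply_basis_fst_fourth hric]
  linarith [hR.1 x₂ x₆ x₅ x₄, hR.1 x₄ x₆ x₅ x₂, hR.1 x₂ x₄ x₅ x₆]

end CurvJet
end

section
/- Let R be an algebraic curvature tensor on V with vanishing Ricci tensor (ric_R = 0), and fix x₂,x₄,x₅,x₆ ∈ V. Consider the 5-tensor T(z₁,z₂,z₃,z₄,z₅) := ⟪z₅,x₆⟫·R(z₁,z₂,z₃,z₄) with argument slots labeled 1,…,5, and let c be the Young symmetrizer of the tableau with rows {1,3,5}, {2,4} and columns {1,2}, {3,4}. Then Σᵢ (c·T)(eᵢ,x₂,eᵢ,x₄,x₅) = 6·( R(x₆,x₂,x₅,x₄) + R(x₆,x₄,x₅,x₂) ). -/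
/-! Expanding the Young symmetrizer produces 48 terms `⟪a₅, x₆⟫ R(a₁, a₂, a₃, a₄)`. A term with
both copies of `eᵢ` inside `R` is a trace of `R` over two slots, which vanishes since `R` is
Ricci-flat (or, for the slot pairs `{1,2}` and `{3,4}`, by antisymmetry). A term with `eᵢ` in the
fifth slot contracts, by Parseval, to `R` with `x₆` in place of `eᵢ`. The sixteen surviving terms
add up to `6 (R(x₆,x₂,x₅,x₄) + R(x₆,x₄,x₅,x₂))` by antisymmetry and pair symmetry alone. -/

open scoped RealInnerProductSpace

namespace CurvJet

variable {V : Type*} [NormedAddCommGroup V] [InnerProductSpace ℝ V] {n : ℕ}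

theorem rowSym5_eq {V : Type*} (T : V → V → V → V → V → ℝ) (z₁ z₂ z₃ z₄ z₅ : V) :
    rowSym5 T z₁ z₂ z₃ z₄ z₅ =
      T z₁ z₂ z₃ z₄ z₅ + T z₁ z₄ z₃ z₂ z₅
    + T z₃ z₂ z₁ z₄ z₅ + T z₃ z₄ z₁ z₂ z₅
    + T z₅ z₂ z₃ z₄ z₁ + T z₅ z₄ z₃ z₂ z₁
    + T z₁ z₂ z₅ z₄ z₃ + T z₁ z₄ z₅ z₂ z₃
    + T z₃ z₂ z₅ z₄ z₁ + T z₃ z₄ z₅ z₂ z₁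
    + T z₅ z₂ z₁ z₄ z₃ + T z₅ z₄ z₁ z₂ z₃ := by
  rw [rowSym5, show (Finset.univ : Finset (Equiv.Perm (Fin 3))) =
    {Equiv.refl _, Equiv.swap 0 1, Equiv.swap 0 2, Equiv.swap 1 2,
     Equiv.swap 0 1 * Equiv.swap 1 2, Equiv.swap 0 2 * Equiv.swap 1 2} by decide,
    Finset.sum_insert (by decide), Finset.sum_insert (by decide), Finset.sum_insert (by decide),
    Finset.sum_insert (by decide), Finset.sum_insert (by decide), Finset.sum_singleton]
  simp only [Equiv.refl_apply, Equiv.Perm.coe_mul, Function.comp_apply, Equiv.swap_apply_def,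
    Matrix.cons_val_zero, Matrix.cons_val_one, Matrix.cons_val, Fin.isValue, Fin.reduceEq,
    reduceIte]
  ring

theorem _root_.OrthonormalBasis.sum_inner_mul_apply {V ι : Type*} [NormedAddCommGroup V]
    [InnerProductSpace ℝ V] [Fintype ι] (e : OrthonormalBasis ι ℝ V) (f : V →ₗ[ℝ] ℝ) (x : V) :
    ∑ i, ⟪e i, x⟫ * f (e i) = f x := by
  conv_rhs => rw [← e.sum_repr' x]
  simp [map_sum]

section Contraction

variable {V : Type*} [NormedAddCommGroup V] [InnerProductSpace ℝ V] {n : ℕ}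
  (e : OrthonormalBasis (Fin n) ℝ V) (R : Curv V) (x a b c : V)

theorem sum_inner_mul_apply₁ : ∑ i, ⟪e i, x⟫ * R (e i) a b c = R x a b c :=
  e.sum_inner_mul_apply (((R.flip a).flip b).flip c) x

theorem sum_inner_mul_apply₂ : ∑ i, ⟪e i, x⟫ * R a (e i) b c = R a x b c :=
  e.sum_inner_mul_apply (((R a).flip b).flip c) x

theorem sum_inner_mul_apply₃ : ∑ i, ⟪e i, x⟫ * R a b (e i) c = R a b x c :=
  e.sum_inner_mul_apply ((R a b).flip c) x

theorem sum_inner_mul_apply₄ : ∑ i, ⟪e i, x⟫ * R a b c (e i) = R a b c x :=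
  e.sum_inner_mul_apply (R a b c) x

end Contraction

section RicciFlat

variable {V : Type*} [NormedAddCommGroup V] [InnerProductSpace ℝ V] {n : ℕ}
  {e : OrthonormalBasis (Fin n) ℝ V} {R : Curv V}

theorem IsCurv.sum_apply_basis_basis₁₂ (hR : IsCurv R) (a b : V) :
    ∑ i, R (e i) (e i) a b = 0 :=
  Finset.sum_eq_zero fun i _ => by linarith [hR.1 (e i) (e i) a b]

theorem IsCurv.sum_apply_basis_basis₃₄ (hR : IsCurv R) (a b : V) :
    ∑ i, R a b (e i) (e i) = 0 := by
  simp_rw [hR.2.1 a b]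
  exact hR.sum_apply_basis_basis₁₂ a b

theorem sum_apply_basis_basis₂₄ (hric : ∀ x y, ric e R x y = 0) (a b : V) :
    ∑ i, R a (e i) b (e i) = 0 :=
  neg_eq_zero.mp (hric a b)

theorem IsCurv.sum_apply_basis_basis₁₄ (hR : IsCurv R) (hric : ∀ x y, ric e R x y = 0)
    (a b : V) : ∑ i, R (e i) a b (e i) = 0 := by
  simp_rw [hR.1 _ a, Finset.sum_neg_distrib, sum_apply_basis_basis₂₄ hric, neg_zero]

theorem IsCurv.sum_apply_basis_basis₂₃ (hR : IsCurv R) (hric : ∀ x y, ric e R x y = 0)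
    (a b : V) : ∑ i, R a (e i) (e i) b = 0 := by
  simp_rw [hR.2.1 a, hR.1 _ b, Finset.sum_neg_distrib, sum_apply_basis_basis₂₄ hric, neg_zero]

theorem IsCurv.sum_apply_basis_basis₁₃ (hR : IsCurv R) (hric : ∀ x y, ric e R x y = 0)
    (a b : V) : ∑ i, R (e i) a (e i) b = 0 := by
  simp_rw [hR.1 _ a, Finset.sum_neg_distrib, hR.sum_apply_basis_basis₂₃ hric, neg_zero]

end RicciFlat

/-- Trace of the Young symmetrizer with rows `{1,3,5}`, `{2,4}` applied to
the 5-tensor `(z₁,…,z₅) ↦ ⟪z₅,x₆⟫·R(z₁,z₂,z₃,z₄)` for Ricci-flat `R`. -/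
theorem young32_trace_metric
    {V : Type*} [NormedAddCommGroup V] [InnerProductSpace ℝ V] {n : ℕ}
    (e : OrthonormalBasis (Fin n) ℝ V)
    (R : Curv V) (hR : IsCurv R) (hric : ∀ x y, ric e R x y = 0)
    (x₂ x₄ x₅ x₆ : V) :
    ∑ i, young5 (fun z₁ z₂ z₃ z₄ z₅ => ⟪z₅, x₆⟫ * R z₁ z₂ z₃ z₄) (e i) x₂ (e i) x₄ x₅ =
      6 * (R x₆ x₂ x₅ x₄ + R x₆ x₄ x₅ x₂) := by
  simp only [young5, rowSym5_eq, Finset.sum_add_distrib, Finset.sum_sub_distrib, ← Finset.mul_sum]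
  simp only [hR.sum_apply_basis_basis₁₂, hR.sum_apply_basis_basis₃₄,
    sum_apply_basis_basis₂₄ hric, hR.sum_apply_basis_basis₁₄ hric,
    hR.sum_apply_basis_basis₂₃ hric, hR.sum_apply_basis_basis₁₃ hric,
    sum_inner_mul_apply₁, sum_inner_mul_apply₂, sum_inner_mul_apply₃, sum_inner_mul_apply₄,
    mul_zero, add_zero, zero_add]
  linear_combination 2 * hR.2.1 x₅ x₂ x₆ x₄ + 2 * hR.2.1 x₅ x₄ x₆ x₂ - 2 * hR.1 x₂ x₆ x₅ x₄
    - hR.2.1 x₅ x₆ x₂ x₄ - hR.2.1 x₅ x₄ x₂ x₆ - hR.2.1 x₅ x₂ x₄ x₆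
    - 2 * hR.1 x₄ x₆ x₅ x₂ - hR.2.1 x₅ x₆ x₄ x₂ - 2 * hR.1 x₄ x₂ x₅ x₆

end CurvJet
end
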